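/- Let p be an odd prime and F a field of characteristic p, and let G be a group. If x ∈ G has order > 2 with a x a = x^{-1} for an involution a ∈ G, and c ∈ G is central of order p, then the subgroup of the unit group of FG generated by u = 1 + (x − x^{-1})ĉ and a is isomorphic to a semidirect product C_p ⋊ C_2 which is non-abelian, hence non-nilpotent. -/

import Mathlib

open MonoidAlgebra

/-- The augmentation map of a group algebra. -/
noncomputable def aug (F G : Type*) [CommSemiring F] [Group G] :
    MonoidAlgebra F G →ₐ[F] F := MonoidAlgebra.lift F F G 1

/-- The classical involution `∑ a_g g ↦ ∑ a_g g⁻¹` of a group algebra. -/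
noncomputable def classicalStar {F G : Type*} [CommSemiring F] [Group G]
    (x : MonoidAlgebra F G) : MonoidAlgebra F G := MonoidAlgebra.ofCoeff (Finsupp.mapDomain (·⁻¹) x.coeff)

/-- A unit of the group algebra is unitary if it is normalized (augmentation one)
and its classical star is its inverse. -/
def IsUnitaryUnit {F G : Type*} [CommSemiring F] [Group G]
    (u : (MonoidAlgebra F G)ˣ) : Prop :=
  aug F G (u : MonoidAlgebra F G) = 1 ∧
    classicalStar (u : MonoidAlgebra F G) = ((u⁻¹ : (MonoidAlgebra F G)ˣ) : MonoidAlgebra F G)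

/-- A group is locally nilpotent if every finitely generated subgroup is nilpotent. -/
def IsLocallyNilpotent (G : Type*) [Group G] : Prop :=
  ∀ H : Subgroup G, H.FG → Group.IsNilpotent H

/-- `V_*(FG)` is locally nilpotent: every finitely generated subgroup of the unit
group consisting of unitary units is nilpotent. -/
def VstarLocallyNilpotent (F G : Type*) [CommSemiring F] [Group G] : Prop :=
  ∀ S : Subgroup (MonoidAlgebra F G)ˣ, (∀ u ∈ S, IsUnitaryUnit u) → S.FG →
    Group.IsNilpotent S

/-- `V(FG)` is locally nilpotent: every finitely generated subgroup of the unit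
group consisting of normalized units is nilpotent. -/
def VLocallyNilpotent (F G : Type*) [CommSemiring F] [Group G] : Prop :=
  ∀ S : Subgroup (MonoidAlgebra F G)ˣ,
    (∀ u ∈ S, aug F G (u : MonoidAlgebra F G) = 1) → S.FG → Group.IsNilpotent S

/-- `ĉ = 1 + c + ⋯ + c^(p-1)` in the group algebra. -/
noncomputable def chat (F : Type*) {G : Type*} [CommSemiring F] [Group G]
    (c : G) (p : ℕ) : MonoidAlgebra F G :=
  ∑ i ∈ Finset.range p, MonoidAlgebra.of F G c ^ i

/-- The commutator `(x,y) = x⁻¹y⁻¹xy`. -/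
def gcomm {M : Type*} [Group M] (x y : M) : M := x⁻¹ * y⁻¹ * x * y

/-- Left-normed iterated commutator `(x, y, n)`. -/
def itComm {M : Type*} [Group M] (x y : M) : ℕ → M
  | 0 => x
  | n + 1 => gcomm (itComm x y n) y


open MonoidAlgebra

private lemma upperCentral_bot' {M : Type*} [Group M] (h : Subgroup.center M = ⊥) :
    ∀ n, Subgroup.upperCentralSeries M n = ⊥ := by
  intro n
  induction n with
  | zero => rfl
  | succ n ih =>
    ext z
    rw [mem_upperCentralSeries_succ_iff]
    simp only [ih, Subgroup.mem_bot]
    constructor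
    · intro hz
      have hz' : z ∈ Subgroup.center M := by
        rw [Subgroup.mem_center_iff]
        intro g
        have h1 := hz g
        have h2 : z * g * z⁻¹ = g := by
          have := congrArg (· * g) h1
          simpa [mul_assoc, commutatorElement_def] using this
        have h3 := congrArg (· * z) h2
        simp only [mul_assoc] at h3
        simpa [mul_assoc] using h3.symm
      rw [h, Subgroup.mem_bot] at hz'
      exact hz'
    · rintro rfl g; group

private lemma not_nilpotent_of_center_bot' {M : Type*} [Group M] [Nontrivial M]
    (h : Subgroup.center M = ⊥) : ¬ Group.IsNilpotent M := by
  rintro ⟨n, hn⟩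
  have := upperCentral_bot' h n
  rw [hn] at this
  exact absurd this top_ne_bot

private lemma dihedral_center_bot' (p : ℕ) [Fact p.Prime] (hp : Odd p) :
    Subgroup.center (DihedralGroup p) = ⊥ := by
  have hpne2 : p ≠ 2 := by rintro rfl; exact (by decide : ¬ Odd 2) hp
  have h2 : (2 : ZMod p) ≠ 0 := by
    intro h
    have : ((2 : ℕ) : ZMod p) = 0 := by exact_mod_cast h
    rw [ZMod.natCast_eq_zero_iff] at this
    exact hpne2 ((Nat.prime_dvd_prime_iff_eq Fact.out Nat.prime_two).mp this)
  rw [eq_bot_iff]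
  rintro (i | i) hg
  · have h1 := (Subgroup.mem_center_iff.mp hg) (DihedralGroup.sr 0)
    simp only [DihedralGroup.sr_mul_r, DihedralGroup.r_mul_sr, zero_add, zero_sub,
      DihedralGroup.sr.injEq] at h1
    have h2i : (2 : ZMod p) * i = 0 := by linear_combination h1
    rcases mul_eq_zero.mp h2i with h | h
    · exact absurd h h2
    · rw [Subgroup.mem_bot, h]
      exact DihedralGroup.one_def.symm
  · have h1 := (Subgroup.mem_center_iff.mp hg) (DihedralGroup.r 1)
    simp only [DihedralGroup.r_mul_sr, DihedralGroup.sr_mul_r, DihedralGroup.sr.injEq] at h1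
    exact absurd (by linear_combination -h1) h2

private lemma closure_dihedral' {M : Type*} [Group M] (p : ℕ) [Fact p.Prime] (u s : M)
    (hu : orderOf u = p) (hs2 : s * s = 1) (hrel : s * u * s = u⁻¹)
    (hns : ∀ k : ℕ, s ≠ u ^ k) :
    Nonempty ((Subgroup.closure {u, s} : Subgroup M) ≃* DihedralGroup p) := by
  haveI : NeZero p := ⟨(Fact.out : p.Prime).ne_zero⟩
  haveI : Fact (1 < p) := ⟨(Fact.out : p.Prime).one_lt⟩
  have hup : u ^ p = 1 := hu ▸ pow_orderOf_eq_one u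
  have P : ∀ i j : ZMod p, u ^ (i + j).val = u ^ i.val * u ^ j.val := by
    intro i j
    rw [← pow_add, ZMod.val_add]
    conv_rhs => rw [← pow_mod_orderOf, hu]
  have Ksn : ∀ n : ℕ, s * u ^ n * s = (u ^ n)⁻¹ := by
    intro n
    induction n with
    | zero => simpa using hs2
    | succ n ih =>
      have e1 : s * u ^ (n + 1) * s = (s * u ^ n) * ((s * s) * (u * s)) := by
        rw [hs2, pow_succ]; group
      rw [e1, show (s * u ^ n) * ((s * s) * (u * s)) = (s * u ^ n * s) * (s * u * s) by group,
        ih, hrel, pow_succ', mul_inv_rev]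
  have K' : ∀ i : ZMod p, u ^ i.val * s = s * u ^ (-i).val := by
    intro i
    have h1 : u ^ i.val * u ^ (-i).val = 1 := by
      rw [← P]; simp
    rw [eq_inv_of_mul_eq_one_left h1, ← Ksn]
    simp only [mul_assoc, hs2, mul_one]
  let f : DihedralGroup p → M := fun g =>
    match g with
    | .r i => u ^ i.val
    | .sr i => s * u ^ i.val
  have hf : ∀ g h, f (g * h) = f g * f h := by
    rintro (i | i) (j | j)
    · exact P i j
    · show s * u ^ (j - i).val = u ^ i.val * (s * u ^ j.val)
      rw [← mul_assoc, K', mul_assoc, ← P, neg_add_eq_sub]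
    · show s * u ^ (i + j).val = (s * u ^ i.val) * u ^ j.val
      rw [mul_assoc, P]
    · show u ^ (j - i).val = (s * u ^ i.val) * (s * u ^ j.val)
      rw [show (s * u ^ i.val) * (s * u ^ j.val) = s * (u ^ i.val * s) * u ^ j.val by group,
        K', show s * (s * u ^ (-i).val) * u ^ j.val = (s * s) * (u ^ (-i).val * u ^ j.val) by
          group, hs2, one_mul, ← P, neg_add_eq_sub]
  let φ : DihedralGroup p →* M := MonoidHom.mk' f hf
  have hinj : Function.Injective φ := by
    rw [injective_iff_map_eq_one]
    rintro (i | i) h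
    · replace h : u ^ i.val = 1 := h
      have hd : p ∣ i.val := by
        have := orderOf_dvd_of_pow_eq_one h; rwa [hu] at this
      have hv : i.val = 0 := Nat.eq_zero_of_dvd_of_lt hd (ZMod.val_lt i)
      rw [(ZMod.val_eq_zero i).mp hv]
      exact DihedralGroup.one_def.symm
    · exfalso
      replace h : s * u ^ i.val = 1 := h
      have hsu : s = (u ^ i.val)⁻¹ := eq_inv_of_mul_eq_one_left h
      have huinv : u⁻¹ = u ^ (p - 1) := by
        refine inv_eq_of_mul_eq_one_right ?_
        rw [← pow_succ']
        rw [show p - 1 + 1 = p from Nat.succ_pred_eq_of_pos (Fact.out : p.Prime).pos]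
        exact hup
      rw [← inv_pow, huinv, ← pow_mul] at hsu
      exact hns _ hsu
  have hrange : φ.range = Subgroup.closure {u, s} := by
    apply le_antisymm
    · rintro _ ⟨(i | i), rfl⟩
      · exact pow_mem (Subgroup.subset_closure (by simp)) _
      · exact mul_mem (Subgroup.subset_closure (by simp))
          (pow_mem (Subgroup.subset_closure (by simp)) _)
    · rw [Subgroup.closure_le]
      rintro g hg
      simp only [Set.mem_insert_iff, Set.mem_singleton_iff] at hg
      rcases hg with h | h
      · refine ⟨DihedralGroup.r 1, ?_⟩
        rw [h]
        show u ^ (1 : ZMod p).val = u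
        rw [ZMod.val_one, pow_one]
      · refine ⟨DihedralGroup.sr 0, ?_⟩
        rw [h]
        show s * u ^ (0 : ZMod p).val = s
        simp
  exact ⟨((MonoidHom.ofInjective hinj).trans (MulEquiv.subgroupCongr hrange)).symm⟩
theorem stmt9 (F G : Type*) [Field F] [Group G] (p : ℕ) [Fact p.Prime] (hp : Odd p)
    [CharP F p] (c : G) (hc : c ∈ Subgroup.center G) (hord : orderOf c = p)
    (a x : G) (ha : orderOf a = 2) (hx : 2 < orderOf x) (hax : a * x * a = x⁻¹)
    (u au : (MonoidAlgebra F G)ˣ)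
    (hu : (u : MonoidAlgebra F G) =
      1 + (MonoidAlgebra.of F G x - MonoidAlgebra.of F G x⁻¹) * chat F c p)
    (hau : (au : MonoidAlgebra F G) = MonoidAlgebra.of F G a) :
    Nonempty ((Subgroup.closure {u, au} : Subgroup (MonoidAlgebra F G)ˣ) ≃* DihedralGroup p) ∧
      ¬ Group.IsNilpotent (Subgroup.closure {u, au} : Subgroup (MonoidAlgebra F G)ˣ) := by
  classical
  have hpp : p.Prime := Fact.out
  -- elementary group facts
  have haa : a * a = 1 := by rw [← sq, ← ha]; exact pow_orderOf_eq_one a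
  have hxx : x * x ≠ 1 := by
    intro h
    have h1 : orderOf x ∣ 2 := orderOf_dvd_of_pow_eq_one (by rwa [pow_two])
    have := Nat.le_of_dvd two_pos h1
    omega
  have hxcen : x ∉ Subgroup.center G := by
    intro hmem
    have h1 : a * x = x * a := Subgroup.mem_center_iff.mp hmem a
    have h2 : x = x⁻¹ := by rw [← hax, h1, mul_assoc, haa, mul_one]
    exact hxx (by rw [mul_eq_one_iff_eq_inv]; exact h2)
  have hane1 : a ≠ 1 := by intro h; rw [h, orderOf_one] at ha; omega
  have hxne : ∀ g ∈ Subgroup.center G, x ≠ g := fun g hg h => hxcen (h ▸ hg)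
  have hxine : ∀ g ∈ Subgroup.center G, x⁻¹ ≠ g := by
    intro g hg h
    exact hxcen (by rw [← inv_inv x, h]; exact (Subgroup.center G).inv_mem hg)
  have hcent : ∀ i : ℕ, c ^ i ∈ Subgroup.center G := fun i => pow_mem hc i
  have hp2 : ¬ (p ∣ 2) := by
    intro hd
    have := (Nat.prime_dvd_prime_iff_eq hpp Nat.prime_two).mp hd
    rw [this] at hp
    exact (by decide : ¬ Odd 2) hp
  have hKey : ∀ i < p, c ^ i ≠ x * x := by
    intro i hip heq
    have hcomm : a * c ^ i = c ^ i * a := Subgroup.mem_center_iff.mp (hcent i) a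
    have h1 : a * (x * x) * a = x⁻¹ * x⁻¹ := by
      calc a * (x * x) * a = a * x * ((a * a) * (x * a)) := by rw [haa]; group
        _ = (a * x * a) * (a * x * a) := by group
        _ = x⁻¹ * x⁻¹ := by rw [hax]
    have h2 : a * c ^ i * a = c ^ i := by rw [hcomm, mul_assoc, haa, mul_one]
    rw [heq, h1] at h2
    -- h2 : x⁻¹ * x⁻¹ = c ^ i = x * x
    have h4 : c ^ (2 * i) = 1 := by
      rw [two_mul, pow_add, heq]
      nth_rewrite 1 [← h2]
      group
    have h6 : p ∣ 2 * i := by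
      rw [← hord]; exact orderOf_dvd_of_pow_eq_one h4
    have h7 : p ∣ i := (Nat.Coprime.dvd_of_dvd_mul_left (hpp.coprime_iff_not_dvd.mpr hp2) h6)
    have h8 : i = 0 := Nat.eq_zero_of_dvd_of_lt h7 hip
    rw [h8, pow_zero] at heq
    exact hxx heq.symm
  -- algebra elements
  set R := MonoidAlgebra F G with hR
  set X : R := MonoidAlgebra.of F G x with hX
  set Xi : R := MonoidAlgebra.of F G x⁻¹ with hXi
  set A' : R := MonoidAlgebra.of F G a with hA'
  set C : R := chat F c p with hCs
  set t : R := (X - Xi) * C with hts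
  have hu' : (u : R) = 1 + t := hu
  have hCdef : C = ∑ i ∈ Finset.range p, MonoidAlgebra.of F G c ^ i := rfl
  have hgc : ∀ g : G, Commute (MonoidAlgebra.of F G g) C := by
    intro g
    rw [hCdef]
    apply Commute.sum_right
    intro i _
    have hone : Commute (MonoidAlgebra.of F G g) (MonoidAlgebra.of F G c) := by
      show _ * _ = _ * _
      rw [← map_mul, ← map_mul, Subgroup.mem_center_iff.mp hc g]
    exact hone.pow_right i
  have hzp : (MonoidAlgebra.of F G c) ^ p = 1 := by
    rw [← map_pow, ← hord, pow_orderOf_eq_one, map_one]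
  have hCz : C * MonoidAlgebra.of F G c = C := by
    have h := geom_sum_mul (MonoidAlgebra.of F G c) p
    rw [hzp, sub_self, ← hCdef, mul_sub, mul_one] at h
    exact sub_eq_zero.mp h
  have hCpow : ∀ i : ℕ, C * MonoidAlgebra.of F G c ^ i = C := by
    intro i
    induction i with
    | zero => rw [pow_zero, mul_one]
    | succ n ih => rw [pow_succ, ← mul_assoc, ih, hCz]
  have hcastp : (p : R) = 0 := by
    rw [← map_natCast (algebraMap F R) p, CharP.cast_eq_zero F p, map_zero]
  have hCC : C * C = 0 := by
    calc C * C = C * ∑ i ∈ Finset.range p, MonoidAlgebra.of F G c ^ i := by rw [← hCdef]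
      _ = ∑ i ∈ Finset.range p, C * MonoidAlgebra.of F G c ^ i := by rw [Finset.mul_sum]
      _ = ∑ _i ∈ Finset.range p, C := Finset.sum_congr rfl fun i _ => hCpow i
      _ = p • C := by rw [Finset.sum_const, Finset.card_range]
      _ = (p : R) * C := by rw [nsmul_eq_mul]
      _ = 0 := by rw [hcastp, zero_mul]
  have hXC : Commute (X - Xi) C := Commute.sub_left (hgc x) (hgc x⁻¹)
  have ht2 : t * t = 0 := by
    have h1 : C * ((X - Xi) * C) = 0 := by
      rw [← mul_assoc, ← hXC.eq, mul_assoc, hCC, mul_zero]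
    rw [hts, mul_assoc, h1, mul_zero]
  have hun : ∀ n : ℕ, (u : R) ^ n = 1 + (n : F) • t := by
    intro n
    induction n with
    | zero => simp
    | succ n ih =>
      rw [pow_succ, ih, hu', mul_add, mul_one, add_mul, one_mul, smul_mul_assoc, ht2,
        smul_zero, add_zero, Nat.cast_succ, add_smul, one_smul, ← add_assoc]
  have hupow : u ^ p = 1 := by
    apply Units.ext
    rw [Units.val_pow_eq_pow_val, hun p, CharP.cast_eq_zero F p, zero_smul, add_zero,
      Units.val_one]
  -- coefficient computations
  have hXmulC : ∀ g : G, (MonoidAlgebra.of F G g * C).coeff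
      = ∑ i ∈ Finset.range p, Finsupp.single (g * c ^ i) (1 : F) := by
    intro g
    rw [hCdef, Finset.mul_sum, MonoidAlgebra.coeff_sum]
    refine Finset.sum_congr rfl fun i _ => ?_
    rw [← map_pow, ← map_mul]
    rfl
  have htsum : t.coeff = (∑ i ∈ Finset.range p, Finsupp.single (x * c ^ i) (1 : F))
      - ∑ i ∈ Finset.range p, Finsupp.single (x⁻¹ * c ^ i) (1 : F) := by
    rw [hts, sub_mul, MonoidAlgebra.coeff_sub, hX, hXi, hXmulC, hXmulC]
  have htx : t.coeff x = 1 := by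
    rw [htsum, Finsupp.sub_apply, Finsupp.finset_sum_apply, Finsupp.finset_sum_apply]
    have e1 : ∑ i ∈ Finset.range p, (Finsupp.single (x * c ^ i) (1 : F)) x = 1 := by
      rw [Finset.sum_eq_single 0]
      · simp
      · intro i hi hne
        rw [Finsupp.single_apply, if_neg]
        intro heq
        have hc1 : c ^ i = 1 := by
          have : x * c ^ i = x * 1 := by rw [mul_one]; exact heq
          exact mul_left_cancel this
        have hdvd : p ∣ i := by rw [← hord]; exact orderOf_dvd_of_pow_eq_one hc1
        exact hne (Nat.eq_zero_of_dvd_of_lt hdvd (Finset.mem_range.mp hi))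
      · intro h; exact absurd (Finset.mem_range.mpr hpp.pos) h
    have e2 : ∑ i ∈ Finset.range p, (Finsupp.single (x⁻¹ * c ^ i) (1 : F)) x = 0 := by
      apply Finset.sum_eq_zero
      intro i hi
      rw [Finsupp.single_apply, if_neg]
      intro heq
      apply hKey i (Finset.mem_range.mp hi)
      have h := congrArg (x * ·) heq
      simpa [← mul_assoc] using h
    rw [e1, e2, sub_zero]
  have ht1 : t.coeff 1 = 0 := by
    rw [htsum, Finsupp.sub_apply, Finsupp.finset_sum_apply, Finsupp.finset_sum_apply]
    have e1 : ∑ i ∈ Finset.range p, (Finsupp.single (x * c ^ i) (1 : F)) 1 = 0 := by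
      apply Finset.sum_eq_zero
      intro i _
      rw [Finsupp.single_apply, if_neg]
      intro heq
      exact hxne ((c ^ i)⁻¹) ((Subgroup.center G).inv_mem (hcent i)) (eq_inv_of_mul_eq_one_left heq)
    have e2 : ∑ i ∈ Finset.range p, (Finsupp.single (x⁻¹ * c ^ i) (1 : F)) 1 = 0 := by
      apply Finset.sum_eq_zero
      intro i _
      rw [Finsupp.single_apply, if_neg]
      intro heq
      exact hxine ((c ^ i)⁻¹) ((Subgroup.center G).inv_mem (hcent i))
        (eq_inv_of_mul_eq_one_left heq)
    rw [e1, e2, sub_zero]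
  have ht0 : t ≠ 0 := by
    intro h
    rw [h] at htx
    simp at htx
  have hune1 : u ≠ 1 := by
    intro h
    have h1 : (u : R) = 1 := by rw [h, Units.val_one]
    rw [hu'] at h1
    exact ht0 (by
      have := congrArg (· - (1 : R)) h1
      simpa using this)
  have horderu : orderOf u = p := orderOf_eq_prime hupow hune1
  -- au facts
  have hA2 : A' * A' = 1 := by rw [hA', ← map_mul, haa, map_one]
  have hau2 : au * au = 1 := by
    apply Units.ext
    rw [Units.val_mul, hau, Units.val_one]
    exact hA2
  have haxi : a * x⁻¹ * a = x := by
    have hainv : a⁻¹ = a := inv_eq_of_mul_eq_one_right haa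
    have h := congrArg (·⁻¹) hax
    simp only [mul_inv_rev, hainv, inv_inv] at h
    rw [mul_assoc]; exact h
  have hAtA : A' * t * A' = -t := by
    have h1 : A' * t * A' = (A' * (X - Xi) * A') * C := by
      rw [hts, ← mul_assoc, mul_assoc (A' * (X - Xi)) C A', (hgc a).eq.symm]
      rw [← mul_assoc, mul_assoc]
    have h2 : A' * (X - Xi) * A' = Xi - X := by
      rw [mul_sub, sub_mul, hA', hX, hXi]
      rw [← map_mul, ← map_mul, ← map_mul, ← map_mul, hax, haxi]
    rw [h1, h2, ← neg_sub X Xi, neg_mul, ← hts]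
  have hconj : A' * ((1 : R) + t) * A' = 1 - t := by
    rw [mul_add, mul_one, add_mul, hA2, hAtA, sub_eq_add_neg]
  have hrelu : au * u * au = u⁻¹ := by
    have h1 : u * (au * u * au) = 1 := by
      apply Units.ext
      rw [Units.val_mul, Units.val_mul, Units.val_mul, hu', hau, Units.val_one, hconj]
      have : ((1 : R) + t) * (1 - t) = 1 - t * t := by rw [add_mul, one_mul, mul_sub, mul_one]; abel
      rw [this, ht2, sub_zero]
    exact (inv_eq_of_mul_eq_one_right h1).symm
  have hns : ∀ k : ℕ, au ≠ u ^ k := by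
    intro k h
    have hval : (au : R) = (u : R) ^ k := by
      rw [h, Units.val_pow_eq_pow_val]
    rw [hau, hun k] at hval
    have happ := congrArg (fun f : MonoidAlgebra F G => f.coeff 1) hval
    rw [hA'] at happ
    rw [MonoidAlgebra.of_apply, MonoidAlgebra.coeff_single, Finsupp.single_apply, if_neg hane1] at happ
    rw [MonoidAlgebra.coeff_add, Finsupp.add_apply, MonoidAlgebra.coeff_smul, Finsupp.smul_apply, ht1, smul_zero, add_zero] at happ
    rw [MonoidAlgebra.one_def, MonoidAlgebra.coeff_single, Finsupp.single_eq_same] at happ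
    exact one_ne_zero happ.symm
  obtain ⟨e⟩ := closure_dihedral' p u au horderu hau2 hrelu hns
  refine ⟨⟨e⟩, ?_⟩
  intro hnil
  exact not_nilpotent_of_center_bot' (dihedral_center_bot' p hp)
    (@nilpotent_of_mulEquiv _ _ _ _ hnil e)
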